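/- arXiv:2004.01606 — 13 statements merged into one kernel-verified Lean document; each statement's English description precedes it below -/
import Mathlib

section
/- In a left semi-brace B, the set B + 0 = {b + 0 : b ∈ B} is a subgroup of the multiplicative group (B,∘). -/
/-- In a left semi-brace `B`, the set `B + 0` is a subgroup of the
multiplicative group `(B, ∘)` (identity written `1`). -/
theorem left_semi_brace_add_zero_subgroup
    {B : Type*} [Group B] (add : B → B → B)
    (hassoc : ∀ a b c : B, add (add a b) c = add a (add b c))
    (hbrace : ∀ a b c : B, a * add b c = add (a * b) (a * add a⁻¹ c)) :
    ∃ H : Subgroup B, (H : Set B) = {x : B | ∃ b : B, x = add b 1} := by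
  -- 1 is a middle unit
  have M : ∀ b c : B, add b c = add b (add 1 c) := by
    intro b c
    have h := hbrace 1 b c
    simpa using h
  -- add 1 1 absorbs 1 on the right
  have e1 : add (add 1 1) 1 = add 1 1 := by
    rw [hassoc, ← M]
  -- 1 is additively idempotent
  have L2 : add 1 1 = 1 := by
    have h0 : add (add 1 1)⁻¹ 1 = 1 := by
      have h := hbrace (add 1 1)⁻¹ 1 1
      rw [inv_inv, mul_one, e1, inv_mul_cancel] at h
      exact h.symm
    have h1 : add (add 1 1)⁻¹ 1 = add 1 1 := by
      conv_lhs => rw [M (add 1 1)⁻¹ 1]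
      rw [← hassoc, h0]
    exact h1.symm.trans h0
  -- composition law for the lambda maps
  have lamcomp : ∀ a b c : B,
      (a * b) * add (a * b)⁻¹ c = a * add a⁻¹ (b * add b⁻¹ c) := by
    intro a b c
    have h := hbrace b (b⁻¹ * a⁻¹) c
    have h2 : (a * b) * add (a * b)⁻¹ c = a * (b * add (b⁻¹ * a⁻¹) c) := by
      rw [mul_inv_rev, mul_assoc]
    rw [h2, h, mul_inv_cancel_left]
  -- every element of the carrier is fixed by adding 1 on the right
  have fix : ∀ b : B, add (add b 1) 1 = add b 1 := by
    intro b; rw [hassoc, L2]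
  -- lambda_x(1) = 1 for x in the carrier
  have lam_one : ∀ x : B, add x 1 = x → x * add x⁻¹ 1 = 1 := by
    intro x hx
    have h1 : x⁻¹ * add x 1 = 1 := by rw [hx, inv_mul_cancel]
    have h2 : x * add x⁻¹ 1 = x * add x⁻¹ (x⁻¹ * add (x⁻¹)⁻¹ 1) := by
      rw [inv_inv, h1]
    rw [h2, ← lamcomp x x⁻¹ 1, mul_inv_cancel, inv_one, one_mul, L2]
  refine ⟨{ carrier := {x : B | ∃ b : B, x = add b 1}
          , one_mem' := ⟨1, L2.symm⟩
          , mul_mem' := ?_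
          , inv_mem' := ?_ }, rfl⟩
  · rintro x y ⟨p, rfl⟩ ⟨q, rfl⟩
    refine ⟨add p 1 * add q 1, ?_⟩
    calc add p 1 * add q 1
        = add p 1 * add (add q 1) 1 := by rw [fix q]
      _ = add (add p 1 * add q 1) (add p 1 * add (add p 1)⁻¹ 1) := hbrace _ _ _
      _ = add (add p 1 * add q 1) 1 := by rw [lam_one (add p 1) (fix p)]
  · rintro x ⟨p, rfl⟩
    refine ⟨(add p 1)⁻¹, ?_⟩
    have h := lam_one (add p 1) (fix p)
    calc (add p 1)⁻¹
        = (add p 1)⁻¹ * (add p 1 * add (add p 1)⁻¹ 1) := by rw [h, mul_one]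
      _ = add (add p 1)⁻¹ 1 := by rw [← mul_assoc, inv_mul_cancel, one_mul]
end

section
/- In a left semi-brace B, the set 0 + B = {0 + b : b ∈ B} is a subsemigroup of the multiplicative group (B,∘), i.e., closed under ∘. -/
/-- In a left semi-brace `B`, the set `0 + B` is a subsemigroup of the
multiplicative group `(B, ∘)`, i.e. it is closed under `∘`. -/
theorem left_semi_brace_zero_add_subsemigroup
    {B : Type*} [Group B] (add : B → B → B)
    (hassoc : ∀ a b c : B, add (add a b) c = add a (add b c))
    (hbrace : ∀ a b c : B, a * add b c = add (a * b) (a * add a⁻¹ c)) :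
    ∀ x y : B, x ∈ {z : B | ∃ b : B, z = add 1 b} →
      y ∈ {z : B | ∃ b : B, z = add 1 b} →
      x * y ∈ {z : B | ∃ b : B, z = add 1 b} := by
  rintro x y ⟨a, rfl⟩ ⟨b, rfl⟩
  refine ⟨add a (add 1 a * add (add 1 a)⁻¹ b), ?_⟩
  have h := hbrace (add 1 a) 1 b
  rw [mul_one] at h
  rw [h, hassoc]
end

section
/- Let (B,∘) be a group, f,g commuting idempotent endomorphisms of (B,∘), and define a + b := b ∘ fg(b⁻) ∘ f(a), so (B,+,∘) is a left semi-brace. Then the map ρ_b(a) := (a⁻ + b)⁻ ∘ b satisfies ρ_b(a) = f(a) ∘ fg(b), and ρ is an anti-homomorphism: ρ_b(ρ_a(c)) = ρ_{a∘b}(c) for all a,b,c ∈ B. -/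
/-- For the left semi-brace with `a + b = b ∘ fg(b⁻) ∘ f(a)`, the map
`ρ_b(a) = (a⁻ + b)⁻ ∘ b` satisfies `ρ_b(a) = f(a) ∘ fg(b)` and `ρ` is an
anti-homomorphism: `ρ_b (ρ_a c) = ρ_{a∘b} c`. -/
theorem rho_anti_homomorphism
    {B : Type*} [Group B] (f g : B →* B)
    (hf : ∀ x, f (f x) = f x) (hg : ∀ x, g (g x) = g x)
    (hfg : ∀ x, f (g x) = g (f x))
    (add : B → B → B)
    (hadd : ∀ a b : B, add a b = b * f (g b⁻¹) * f a)
    (ρ : B → B → B)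
    (hρ : ∀ a b : B, ρ b a = (add a⁻¹ b)⁻¹ * b) :
    (∀ a b : B, ρ b a = f a * f (g b)) ∧
    (∀ a b c : B, ρ b (ρ a c) = ρ (a * b) c) := by
  have key : ∀ a b : B, ρ b a = f a * f (g b) := by
    intro a b
    rw [hρ, hadd]
    simp [mul_assoc]
  refine ⟨key, fun a b c => ?_⟩
  rw [key, key, key]
  simp [map_mul, hf, hfg, hg, mul_assoc]
end

section
/- Let (B,∘) be a group and f an idempotent endomorphism of (B,∘). Define a + b := b ∘ f(b⁻) ∘ f(a). Then (B,+) is a rectangular band, i.e., every element satisfies a + a = a and a + b + a = a for all a,b ∈ B. -/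
/-- Let `(B,∘)` be a group and `f` an idempotent endomorphism of `(B,∘)`.
Define `a + b := b ∘ f(b⁻) ∘ f(a)`. Then `(B,+)` is a rectangular band. -/
theorem add_rectangular_band
    {B : Type*} [Group B] (f : B →* B)
    (hf : ∀ x, f (f x) = f x)
    (add : B → B → B)
    (hadd : ∀ a b : B, add a b = b * f b⁻¹ * f a) :
    (∀ a : B, add a a = a) ∧ (∀ a b : B, add (add a b) a = a) := by
  constructor
  · intro a
    simp [hadd]
  · intro a b
    simp [hadd, map_mul, map_inv, hf, mul_assoc]
end

section
/- Let (B,∘) be a group and f an idempotent endomorphism of (B,∘). Then the map r : B × B → B × B defined by r(a,b) = (a ∘ b ∘ f(b⁻ ∘ a⁻), f(a ∘ b)) is an idempotent set-theoretic solution of the Yang-Baxter equation: r² = r and (r × id)(id × r)(r × id) = (id × r)(r × id)(id × r). -/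
/-- `r` acting on the first two factors of `X × X × X`. -/
def ybeL {X : Type*} (r : X × X → X × X) : X × X × X → X × X × X :=
  fun p => ((r (p.1, p.2.1)).1, (r (p.1, p.2.1)).2, p.2.2)

/-- `r` acting on the last two factors of `X × X × X`. -/
def ybeR {X : Type*} (r : X × X → X × X) : X × X × X → X × X × X :=
  fun p => (p.1, r (p.2.1, p.2.2))

/-- `r` is a set-theoretic solution of the Yang-Baxter equation. -/
def IsYBE {X : Type*} (r : X × X → X × X) : Prop :=
  ybeL r ∘ ybeR r ∘ ybeL r = ybeR r ∘ ybeL r ∘ ybeR r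

/-- Let `(B,∘)` be a group and `f` an idempotent endomorphism. Then
`r(a,b) = (a ∘ b ∘ f(b⁻ ∘ a⁻), f(a ∘ b))` is an idempotent set-theoretic
solution of the Yang-Baxter equation: `r² = r` and the braid relation holds. -/
theorem idempotent_solution_from_idempotent_endo
    {B : Type*} [Group B] (f : B →* B)
    (hf : ∀ x, f (f x) = f x)
    (r : B × B → B × B)
    (hr : ∀ a b : B, r (a, b) = (a * b * f (b⁻¹ * a⁻¹), f (a * b))) :
    (r ∘ r = r) ∧ IsYBE r := by
  constructor
  · funext p
    obtain ⟨a, b⟩ := p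
    simp only [Function.comp_apply, hr]
    simp [hf, map_mul, map_inv, mul_assoc]
  · unfold IsYBE
    funext p
    obtain ⟨a, b, c⟩ := p
    simp only [Function.comp_apply, ybeL, ybeR, hr]
    simp [hf, map_mul, map_inv, mul_assoc]
end

section
/- Let (B,∘) be a group and f an idempotent endomorphism of (B,∘). Then the map r : B × B → B × B defined by r(a,b) = (a ∘ b ∘ f(a⁻), f(a)) is a set-theoretic solution of the Yang-Baxter equation. -/
/-- Let `(B,∘)` be a group and `f` an idempotent endomorphism. Then
`r(a,b) = (a ∘ b ∘ f(a⁻), f(a))` is a set-theoretic solution of the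
Yang-Baxter equation. -/
theorem solution_from_idempotent_endo
    {B : Type*} [Group B] (f : B →* B)
    (hf : ∀ x, f (f x) = f x)
    (r : B × B → B × B)
    (hr : ∀ a b : B, r (a, b) = (a * b * f a⁻¹, f a)) :
    IsYBE r := by
  funext p
  obtain ⟨a, b, c⟩ := p
  simp only [Function.comp, ybeL, ybeR, hr, map_mul, map_inv, hf, Prod.mk.injEq]
  exact ⟨by group, trivial⟩
end

section
/- In a generalized left semi-brace S, for all a,b,x ∈ S it holds that λ_{a∘b}(x) = (a∘b)⁰ + λ_a(λ_b(x)), where λ_a(y) := a ∘ (a⁻ + y) and c⁰ := c ∘ c⁻. -/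
/-- In a generalized left semi-brace `S`, writing `λ_a(y) = a ∘ (a⁻ + y)` and
`c⁰ = c ∘ c⁻`, it holds that `λ_{a∘b}(x) = (a∘b)⁰ + λ_a(λ_b(x))`. -/
theorem generalized_semibrace_lambda_comp
    {S : Type*} (add mul : S → S → S) (inv : S → S)
    (hadd : ∀ a b c : S, add (add a b) c = add a (add b c))
    (hmul : ∀ a b c : S, mul (mul a b) c = mul a (mul b c))
    (hcr1 : ∀ a : S, a = mul (mul a (inv a)) a)
    (hcr2 : ∀ a : S, inv a = mul (mul (inv a) a) (inv a))
    (hcr3 : ∀ a : S, mul a (inv a) = mul (inv a) a)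
    (hcrUnique : ∀ a b : S, a = mul (mul a b) a → b = mul (mul b a) b →
      mul a b = mul b a → b = inv a)
    (hbrace : ∀ a b c : S,
      mul a (add b c) = add (mul a b) (mul a (add (inv a) c))) :
    ∀ a b x : S,
      mul (mul a b) (add (inv (mul a b)) x) =
        add (mul (mul a b) (inv (mul a b)))
          (mul a (add (inv a) (mul b (add (inv b) x)))) := by
  intro a b x
  rw [hmul a b, hbrace b (inv (mul a b)) x,
    hbrace a (mul b (inv (mul a b))) (mul b (add (inv b) x)),
    ← hmul a b (inv (mul a b))]
end

section
/- If (S,∘) is a Clifford semigroup (a completely regular semigroup with all idempotents central), then (S,+,∘) with a + b := a ∘ b is a generalized two-sided semi-brace: it satisfies both a ∘ (b+c) = a ∘ b + a ∘ (a⁻+c) and (a+b) ∘ c = (a+c⁻) ∘ c + b ∘ c for all a,b,c ∈ S. -/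
/-- If `(S,∘)` is a Clifford semigroup (completely regular with central
idempotents), then `(S,+,∘)` with `a + b := a ∘ b` is a generalized two-sided
semi-brace: both `a ∘ (b+c) = a ∘ b + a ∘ (a⁻+c)` and
`(a+b) ∘ c = (a+c⁻) ∘ c + b ∘ c` hold. -/
theorem clifford_gives_two_sided_semibrace
    {S : Type*} (mul : S → S → S) (inv : S → S)
    (hmul : ∀ a b c : S, mul (mul a b) c = mul a (mul b c))
    (hcr1 : ∀ a : S, a = mul (mul a (inv a)) a)
    (hcr2 : ∀ a : S, inv a = mul (mul (inv a) a) (inv a))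
    (hcr3 : ∀ a : S, mul a (inv a) = mul (inv a) a)
    (hcrUnique : ∀ a b : S, a = mul (mul a b) a → b = mul (mul b a) b →
      mul a b = mul b a → b = inv a)
    (hcentral : ∀ e : S, mul e e = e → ∀ x : S, mul e x = mul x e) :
    (∀ a b c : S,
      mul a (mul b c) = mul (mul a b) (mul a (mul (inv a) c))) ∧
    (∀ a b c : S,
      mul (mul a b) c = mul (mul (mul a (inv c)) c) (mul b c)) := by
  -- `a ∘ a⁻` is idempotent
  have hidem : ∀ a : S, mul (mul a (inv a)) (mul a (inv a)) = mul a (inv a) := by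
    intro a
    rw [hmul, ← hmul (inv a) a (inv a), ← hcr2]
  -- `a ∘ (a ∘ a⁻) = a`
  have habs : ∀ a : S, mul a (mul a (inv a)) = a := by
    intro a
    rw [hcr3, ← hmul, ← hcr1]
  constructor
  · intro a b c
    have h : mul (mul a b) (mul a (mul (inv a) c))
        = mul a (mul (mul a (inv a)) (mul b c)) := by
      rw [← hmul a (inv a) c, hmul a b, ← hmul b, ← hcentral _ (hidem a) b,
        hmul, hmul]
    rw [h, ← hmul a (mul a (inv a)) (mul b c), habs]
  · intro a b c
    have h : mul (mul (mul a (inv c)) c) (mul b c) = mul a (mul b c) := by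
      rw [hmul, hmul, ← hmul (inv c) c (mul b c), ← hcr3,
        hcentral _ (hidem c) (mul b c), hmul b c (mul c (inv c)), habs]
    rw [h, hmul]
end

section
/- Let Y be a lower semilattice, {S_α : α ∈ Y} a family of disjoint generalized left semi-braces, and for α ≥ β let φ_{α,β} : S_α → S_β be homomorphisms of generalized left semi-braces with φ_{α,α} = id and φ_{β,γ} ∘ φ_{α,β} = φ_{α,γ} for α ≥ β ≥ γ. Then S = ⋃_α S_α with a + b := φ_{α,αβ}(a) + φ_{β,αβ}(b) and a ∘ b := φ_{α,αβ}(a) ∘ φ_{β,αβ}(b) (for a ∈ S_α, b ∈ S_β) is a generalized left semi-brace. -/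
/-- The addition on the union `Σ α, S α` of a strong semilattice system. -/
def sssOp {Y : Type*} [SemilatticeInf Y] {S : Y → Type*}
    (op : ∀ α, S α → S α → S α)
    (φ : ∀ α β, β ≤ α → S α → S β) :
    (Σ α, S α) → (Σ α, S α) → Σ α, S α :=
  fun x y =>
    ⟨x.1 ⊓ y.1, op _ (φ x.1 (x.1 ⊓ y.1) inf_le_left x.2)
      (φ y.1 (x.1 ⊓ y.1) inf_le_right y.2)⟩

/-- Strong semilattice of generalized left semi-braces: given a semilattice `Y`,
a family of generalized left semi-braces `S α`, and structure homomorphisms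
`φ_{α,β} : S α → S β` (for `β ≤ α`) with `φ_{α,α} = id` and
`φ_{β,γ} ∘ φ_{α,β} = φ_{α,γ}`, the union `Σ α, S α` with the induced operations
is again a generalized left semi-brace: `+` is associative, `∘` is associative
and completely regular (every element has a unique completely-regular inverse),
and the left semi-brace law holds. -/
theorem strong_semilattice_of_generalized_semibraces
    {Y : Type*} [SemilatticeInf Y] {S : Y → Type*}
    (add mul : ∀ α, S α → S α → S α) (inv : ∀ α, S α → S α)
    -- each `S α` is a generalized left semi-brace:
    (hadd : ∀ α, ∀ a b c : S α, add α (add α a b) c = add α a (add α b c))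
    (hmul : ∀ α, ∀ a b c : S α, mul α (mul α a b) c = mul α a (mul α b c))
    (hcr1 : ∀ α, ∀ a : S α, a = mul α (mul α a (inv α a)) a)
    (hcr2 : ∀ α, ∀ a : S α, inv α a = mul α (mul α (inv α a) a) (inv α a))
    (hcr3 : ∀ α, ∀ a : S α, mul α a (inv α a) = mul α (inv α a) a)
    (hcrUnique : ∀ α, ∀ a b : S α, a = mul α (mul α a b) a →
      b = mul α (mul α b a) b → mul α a b = mul α b a → b = inv α a)
    (hbrace : ∀ α, ∀ a b c : S α,
      mul α a (add α b c) = add α (mul α a b) (mul α a (add α (inv α a) c)))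
    -- structure maps:
    (φ : ∀ α β, β ≤ α → S α → S β)
    (hφadd : ∀ α β (h : β ≤ α) (a b : S α),
      φ α β h (add α a b) = add β (φ α β h a) (φ α β h b))
    (hφmul : ∀ α β (h : β ≤ α) (a b : S α),
      φ α β h (mul α a b) = mul β (φ α β h a) (φ α β h b))
    (hφid : ∀ α (a : S α), φ α α le_rfl a = a)
    (hφcomp : ∀ α β γ (h1 : β ≤ α) (h2 : γ ≤ β) (a : S α),
      φ β γ h2 (φ α β h1 a) = φ α γ (h2.trans h1) a) :
    -- `(Σ α, S α, +)` is a semigroup: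
    (∀ x y z : Σ α, S α,
      sssOp add φ (sssOp add φ x y) z = sssOp add φ x (sssOp add φ y z)) ∧
    -- `(Σ α, S α, ∘)` is a semigroup:
    (∀ x y z : Σ α, S α,
      sssOp mul φ (sssOp mul φ x y) z = sssOp mul φ x (sssOp mul φ y z)) ∧
    -- `(Σ α, S α, ∘)` is completely regular:
    (∀ x : Σ α, S α, ∃! y : Σ α, S α,
      x = sssOp mul φ (sssOp mul φ x y) x ∧
      y = sssOp mul φ (sssOp mul φ y x) y ∧
      sssOp mul φ x y = sssOp mul φ y x) ∧
    -- the left semi-brace law, with `x⁻ := ⟨x.1, inv _ x.2⟩`: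
    (∀ x y z : Σ α, S α,
      sssOp mul φ x (sssOp add φ y z) =
        sssOp add φ (sssOp mul φ x y)
          (sssOp mul φ x (sssOp add φ ⟨x.1, inv x.1 x.2⟩ z))) := by
  
  classical
  -- move an element of the union between equal indices
  have phi_eq : ∀ {α β : Y} (h : α = β) (a : S α),
      (⟨α, a⟩ : Σ γ, S γ) = ⟨β, φ α β h.ge a⟩ := by
    rintro α β rfl a
    simp [hφid]
  have hφid' : ∀ (α : Y) (h : α ≤ α) (a : S α), φ α α h a = a := fun α h a => hφid α a
  -- generic associativity for any operation with homomorphic structure maps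
  have assoc_gen : ∀ (op : ∀ α, S α → S α → S α),
      (∀ α, ∀ a b c : S α, op α (op α a b) c = op α a (op α b c)) →
      (∀ α β (h : β ≤ α) (a b : S α),
        φ α β h (op α a b) = op β (φ α β h a) (φ α β h b)) →
      ∀ x y z : Σ α, S α,
        sssOp op φ (sssOp op φ x y) z = sssOp op φ x (sssOp op φ y z) := by
    rintro op hop hφop ⟨α, a⟩ ⟨β, b⟩ ⟨γ, c⟩
    have h : (α ⊓ β) ⊓ γ = α ⊓ (β ⊓ γ) := inf_assoc α β γ
    unfold sssOp
    dsimp only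
    rw [phi_eq h]
    refine congrArg _ ?_
    simp only [hφop, hφcomp]
    exact hop _ _ _ _
  -- same-index operation
  have sss_same : ∀ (op : ∀ α, S α → S α → S α),
      (∀ α β (h : β ≤ α) (a b : S α),
        φ α β h (op α a b) = op β (φ α β h a) (φ α β h b)) →
      ∀ (α : Y) (a b : S α),
        sssOp op φ ⟨α, a⟩ ⟨α, b⟩ = ⟨α, op α a b⟩ := by
    intro op hφop α a b
    have h : α ⊓ α = α := inf_idem α
    unfold sssOp
    dsimp only
    rw [phi_eq h]
    refine congrArg _ ?_
    simp only [hφop, hφcomp, hφid']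
  -- φ commutes with inv
  have hφinv : ∀ α β (h : β ≤ α) (a : S α),
      φ α β h (inv α a) = inv β (φ α β h a) := by
    intro α β h a
    apply hcrUnique
    · have := congrArg (φ α β h) (hcr1 α a)
      simpa only [hφmul] using this
    · have := congrArg (φ α β h) (hcr2 α a)
      simpa only [hφmul] using this
    · have := congrArg (φ α β h) (hcr3 α a)
      simpa only [hφmul] using this
  refine ⟨assoc_gen add hadd hφadd, assoc_gen mul hmul hφmul, ?_, ?_⟩
  · -- complete regularity
    rintro ⟨α, a⟩
    refine ⟨⟨α, inv α a⟩, ⟨?_, ?_, ?_⟩, ?_⟩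
    · rw [sss_same mul hφmul, sss_same mul hφmul]
      exact congrArg _ (hcr1 α a)
    · rw [sss_same mul hφmul, sss_same mul hφmul]
      exact congrArg _ (hcr2 α a)
    · rw [sss_same mul hφmul, sss_same mul hφmul]
      exact congrArg _ (hcr3 α a)
    · rintro ⟨β, b⟩ ⟨e1, e2, e3⟩
      -- first, the indices agree
      have hab : α ≤ β := by
        have h1 : α = (α ⊓ β) ⊓ α := congrArg Sigma.fst e1
        exact h1.le.trans ((inf_le_left).trans inf_le_right)
      have hba : β ≤ α := by
        have h1 : β = (β ⊓ α) ⊓ β := congrArg Sigma.fst e2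
        exact h1.le.trans ((inf_le_left).trans inf_le_right)
      have hβα : β = α := le_antisymm hba hab
      subst hβα
      rw [sss_same mul hφmul, sss_same mul hφmul] at e1 e2 e3
      have e1' : a = mul β (mul β a b) a := eq_of_heq (Sigma.mk.inj_iff.mp e1).2
      have e2' : b = mul β (mul β b a) b := eq_of_heq (Sigma.mk.inj_iff.mp e2).2
      have e3' : mul β a b = mul β b a := eq_of_heq (Sigma.mk.inj_iff.mp e3).2
      exact congrArg _ (hcrUnique β a b e1' e2' e3')
  · -- the brace law
    rintro ⟨α, a⟩ ⟨β, b⟩ ⟨γ, c⟩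
    have h : α ⊓ (β ⊓ γ) = (α ⊓ β) ⊓ (α ⊓ (α ⊓ γ)) := by
      apply le_antisymm
      · simp only [le_inf_iff]
        exact ⟨⟨inf_le_left, inf_le_right.trans inf_le_left⟩,
          inf_le_left, inf_le_left, inf_le_right.trans inf_le_right⟩
      · simp only [le_inf_iff]
        exact ⟨inf_le_left.trans inf_le_left,
          inf_le_left.trans inf_le_right,
          inf_le_right.trans (inf_le_right.trans inf_le_right)⟩
    unfold sssOp
    dsimp only
    rw [phi_eq h]
    refine congrArg _ ?_
    simp only [hφadd, hφmul, hφcomp, hφinv, hφid']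
    exact hbrace _ _ _ _
end

section
/- Let Y be a lower semilattice, {X_α : α ∈ Y} disjoint sets, r_α a set-theoretic solution of the Yang-Baxter equation on X_α for each α, and for α ≥ β maps φ_{α,β} : X_α → X_β satisfying: φ_{α,α} = id, φ_{β,γ}φ_{α,β} = φ_{α,γ} for α ≥ β ≥ γ, and (φ_{α,β} × φ_{α,β}) r_α = r_β (φ_{α,β} × φ_{α,β}) for α ≥ β. Then the map r on X = ⋃_α X_α defined by r(x,y) := r_{αβ}(φ_{α,αβ}(x), φ_{β,αβ}(y)) for x ∈ X_α, y ∈ X_β is a set-theoretic solution of the Yang-Baxter equation on X. -/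
/-- The strong semilattice map `r` on the union `Σ α, X α`:
`r(x, y) = r_{αβ}(φ_{α,αβ}(x), φ_{β,αβ}(y))` for `x ∈ X α`, `y ∈ X β`. -/
def sssSol {Y : Type*} [SemilatticeInf Y] {X : Y → Type*}
    (r : ∀ α, X α × X α → X α × X α)
    (φ : ∀ α β, β ≤ α → X α → X β) :
    (Σ α, X α) × (Σ α, X α) → (Σ α, X α) × (Σ α, X α) :=
  fun p =>
    let ν := p.1.1 ⊓ p.2.1
    let q := r ν (φ p.1.1 ν inf_le_left p.1.2, φ p.2.1 ν inf_le_right p.2.2)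
    (⟨ν, q.1⟩, ⟨ν, q.2⟩)

/-- Strong semilattice of solutions: given solutions `r_α` on disjoint sets
`X α` indexed by a semilattice `Y`, and compatible maps `φ_{α,β}` (for `β ≤ α`)
with `φ_{α,α} = id`, `φ_{β,γ}φ_{α,β} = φ_{α,γ}` and
`(φ_{α,β} × φ_{α,β}) r_α = r_β (φ_{α,β} × φ_{α,β})`, the induced map on the
union is a set-theoretic solution of the Yang-Baxter equation. -/
theorem strong_semilattice_of_solutions
    {Y : Type*} [SemilatticeInf Y] {X : Y → Type*}
    (r : ∀ α, X α × X α → X α × X α)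
    (hsol : ∀ α, IsYBE (r α))
    (φ : ∀ α β, β ≤ α → X α → X β)
    (hφid : ∀ α (x : X α), φ α α le_rfl x = x)
    (hφcomp : ∀ α β γ (h1 : β ≤ α) (h2 : γ ≤ β) (x : X α),
      φ β γ h2 (φ α β h1 x) = φ α γ (h2.trans h1) x)
    (hφr : ∀ α β (h : β ≤ α) (p : X α × X α),
      Prod.map (φ α β h) (φ α β h) (r α p) =
        r β (Prod.map (φ α β h) (φ α β h) p)) :
    IsYBE (sssSol r φ) := by
  have hφid' : ∀ δ (h : δ ≤ δ) (u : X δ), φ δ δ h u = u := fun δ h u => hφid δ u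
  have hφr1 : ∀ δ ν (h : ν ≤ δ) (p : X δ × X δ),
      φ δ ν h (r δ p).1 = (r ν (φ δ ν h p.1, φ δ ν h p.2)).1 :=
    fun δ ν h p => congrArg Prod.fst (hφr δ ν h p)
  have hφr2 : ∀ δ ν (h : ν ≤ δ) (p : X δ × X δ),
      φ δ ν h (r δ p).2 = (r ν (φ δ ν h p.1, φ δ ν h p.2)).2 :=
    fun δ ν h p => congrArg Prod.snd (hφr δ ν h p)
  have push : ∀ (δ1 δ2 ν : Y) (h : δ1 ⊓ δ2 = ν) (hle1 : ν ≤ δ1) (hle2 : ν ≤ δ2)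
      (u : X δ1) (v : X δ2),
      sssSol r φ (⟨δ1, u⟩, ⟨δ2, v⟩) =
        (⟨ν, (r ν (φ δ1 ν hle1 u, φ δ2 ν hle2 v)).1⟩,
         ⟨ν, (r ν (φ δ1 ν hle1 u, φ δ2 ν hle2 v)).2⟩) := by
    rintro δ1 δ2 ν rfl hle1 hle2 u v; rfl
  funext p
  obtain ⟨⟨α, x⟩, ⟨β, y⟩, ⟨γ, z⟩⟩ := p
  have hν1 : (α ⊓ β) ⊓ (α ⊓ β ⊓ γ) = α ⊓ β ⊓ γ := inf_eq_right.2 inf_le_left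
  have hν2 : α ⊓ (β ⊓ γ) = α ⊓ β ⊓ γ := (inf_assoc α β γ).symm
  have hν3 : (α ⊓ β ⊓ γ) ⊓ (β ⊓ γ) = α ⊓ β ⊓ γ :=
    inf_eq_left.2 (le_inf (inf_le_left.trans inf_le_right) inf_le_right)
  have hle1 : α ⊓ β ⊓ γ ≤ α ⊓ β := inf_le_left
  have hle2 : α ⊓ β ⊓ γ ≤ β ⊓ γ :=
    le_inf (inf_le_left.trans inf_le_right) inf_le_right
  have hleα : α ⊓ β ⊓ γ ≤ α := inf_le_left.trans inf_le_left
  have hleβ : α ⊓ β ⊓ γ ≤ β := inf_le_left.trans inf_le_right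
  have hleγ : α ⊓ β ⊓ γ ≤ γ := inf_le_right
  simp only [Function.comp_apply, ybeL, ybeR]
  rw [push α β (α ⊓ β) rfl inf_le_left inf_le_right x y]
  rw [push (α ⊓ β) γ (α ⊓ β ⊓ γ) rfl inf_le_left inf_le_right]
  rw [push (α ⊓ β) (α ⊓ β ⊓ γ) (α ⊓ β ⊓ γ) hν1 hle1 le_rfl]
  rw [push β γ (β ⊓ γ) rfl inf_le_left inf_le_right y z]
  rw [push α (β ⊓ γ) (α ⊓ β ⊓ γ) hν2 hleα hle2]
  rw [push (α ⊓ β ⊓ γ) (β ⊓ γ) (α ⊓ β ⊓ γ) hν3 le_rfl hle2]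
  simp only [hφid', hφr1, hφr2, hφcomp]
  have key := congrFun (hsol (α ⊓ β ⊓ γ))
    (φ α _ hleα x, φ β _ hleβ y, φ γ _ hleγ z)
  simp only [Function.comp_apply, ybeL, ybeR] at key
  exact congrArg (fun q : X (α ⊓ β ⊓ γ) × X (α ⊓ β ⊓ γ) × X (α ⊓ β ⊓ γ) =>
    ((⟨α ⊓ β ⊓ γ, q.1⟩ : Σ δ, X δ), (⟨α ⊓ β ⊓ γ, q.2.1⟩ : Σ δ, X δ),
     (⟨α ⊓ β ⊓ γ, q.2.2⟩ : Σ δ, X δ))) key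
end

section
/- Let (X, r) be a strong semilattice of solutions over a finite semilattice Y, where each r_α is bijective with finite period (r_α^{n_α + 1} = r_α for some n_α ≥ 1). Set n := lcm{per(r_α) : α ∈ Y}. Then r^{n+1} = r. -/
private lemma sssSol_same {Y : Type*} [SemilatticeInf Y] {X : Y → Type*}
    (r : ∀ α, X α × X α → X α × X α)
    (φ : ∀ α β, β ≤ α → X α → X β)
    (hφid : ∀ α (x : X α), φ α α le_rfl x = x)
    (α : Y) (x y : X α) :
    sssSol r φ (⟨α, x⟩, ⟨α, y⟩) =
      (⟨α, (r α (x, y)).1⟩, ⟨α, (r α (x, y)).2⟩) := by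
  have key : ∀ β (hle : β ≤ α) (hb : β = α),
      ((⟨β, (r β (φ α β hle x, φ α β hle y)).1⟩ : Σ γ, X γ),
       (⟨β, (r β (φ α β hle x, φ α β hle y)).2⟩ : Σ γ, X γ)) =
      (⟨α, (r α (x, y)).1⟩, ⟨α, (r α (x, y)).2⟩) := by
    intro β hle hb
    subst hb
    have hx : φ β β hle x = x := hφid β x
    have hy : φ β β hle y = y := hφid β y
    rw [hx, hy]
  exact key (α ⊓ α) inf_le_left (inf_idem α)

private lemma sssSol_iterate_same {Y : Type*} [SemilatticeInf Y] {X : Y → Type*}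
    (r : ∀ α, X α × X α → X α × X α)
    (φ : ∀ α β, β ≤ α → X α → X β)
    (hφid : ∀ α (x : X α), φ α α le_rfl x = x)
    (α : Y) (x y : X α) (k : ℕ) :
    (sssSol r φ)^[k] (⟨α, x⟩, ⟨α, y⟩) =
      (⟨α, ((r α)^[k] (x, y)).1⟩, ⟨α, ((r α)^[k] (x, y)).2⟩) := by
  induction k generalizing x y with
  | zero => simp
  | succ k ih =>
    rw [Function.iterate_succ_apply, sssSol_same r φ hφid,
      Function.iterate_succ_apply, ih]

/-- Let `(X, r)` be a strong semilattice of solutions over a finite semilattice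
`Y`, where each `r_α` is bijective of finite period `per α` (the least `k ≥ 1`
with `r_α^{k+1} = r_α`).  With `n := lcm {per(r_α) : α ∈ Y}` one has
`r^{n+1} = r`. -/
theorem strong_semilattice_bijective_finite_period
    {Y : Type*} [SemilatticeInf Y] [Fintype Y] {X : Y → Type*}
    (r : ∀ α, X α × X α → X α × X α)
    (φ : ∀ α β, β ≤ α → X α → X β)
    (hφid : ∀ α (x : X α), φ α α le_rfl x = x)
    (hφcomp : ∀ α β γ (h1 : β ≤ α) (h2 : γ ≤ β) (x : X α),
      φ β γ h2 (φ α β h1 x) = φ α γ (h2.trans h1) x)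
    (hφr : ∀ α β (h : β ≤ α) (p : X α × X α),
      Prod.map (φ α β h) (φ α β h) (r α p) =
        r β (Prod.map (φ α β h) (φ α β h) p))
    (hbij : ∀ α, Function.Bijective (r α))
    (per : Y → ℕ)
    (hper : ∀ α, 0 < per α ∧ (r α)^[per α + 1] = r α ∧
      ∀ k, 0 < k → (r α)^[k + 1] = r α → per α ≤ k)
    (n : ℕ) (hn : n = Finset.univ.lcm per) :
    (sssSol r φ)^[n + 1] = sssSol r φ := by
  -- each r α satisfies (r α)^[per α] = id, hence (r α)^[n] = id
  have hid : ∀ α, (r α)^[n] = id := by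
    intro α
    have hper1 : (r α)^[per α] = id := by
      funext p
      have h := (hper α).2.1
      have : r α ((r α)^[per α] p) = r α p := by
        have := congrFun h p
        rwa [Function.iterate_succ_apply'] at this
      exact (hbij α).injective this
    have hdvd : per α ∣ n := hn ▸ Finset.dvd_lcm (Finset.mem_univ α)
    obtain ⟨k, hk⟩ := hdvd
    rw [hk, Function.iterate_mul, hper1, Function.iterate_id]
  funext p
  obtain ⟨⟨α, x⟩, ⟨β, y⟩⟩ := p
  rw [Function.iterate_succ_apply]
  show (sssSol r φ)^[n] (⟨α ⊓ β, _⟩, ⟨α ⊓ β, _⟩) = _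
  rw [sssSol_iterate_same r φ hφid, hid (α ⊓ β)]
  rfl
end

section
/- Let X = X_α ∪ X_β with α > β in a two-element semilattice, let r_α be the twist map on X_α (r_α(x,y) = (y,x)), let c ∈ X_β be fixed, let r_β(x,y) := (x,c) on X_β, and let φ_{α,β}(x) = c for all x ∈ X_α. Then the strong semilattice solution r on X satisfies r³ = r. -/
/-- The strong semilattice solution on `X = X_α ∪ X_β` (`α > β`) built from the
twist map on `X_α`, the solution `r_β(x,y) = (x,c)` on `X_β`, and the constant
structure map `φ_{α,β}(x) = c`. -/
def rTwistConst {A B : Type*} (c : B) :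
    (A ⊕ B) × (A ⊕ B) → (A ⊕ B) × (A ⊕ B)
  | (Sum.inl x, Sum.inl y) => (Sum.inl y, Sum.inl x)
  | (Sum.inl _, Sum.inr _) => (Sum.inr c, Sum.inr c)
  | (Sum.inr x, Sum.inl _) => (Sum.inr x, Sum.inr c)
  | (Sum.inr x, Sum.inr _) => (Sum.inr x, Sum.inr c)

/-- The strong semilattice solution built from the twist map on `X_α` and the
idempotent solution `r_β(x,y) = (x,c)` on `X_β`, glued by the constant map
`φ_{α,β}(x) = c`, satisfies `r³ = r`. -/
theorem rTwistConst_cube_eq_self {A B : Type*} (c : B) :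
    (rTwistConst (A := A) c) ∘ (rTwistConst c) ∘ (rTwistConst c) =
      rTwistConst c := by
  funext p
  obtain ⟨x | x, y | y⟩ := p <;> rfl
end

section
/- Let (S,∘) be a commutative Clifford semigroup and define r : S × S → S × S by r(a,b) = (a⁰ ∘ b, b⁰ ∘ a), where a⁰ = a ∘ a⁻. Then r is a set-theoretic solution of the Yang-Baxter equation and satisfies r³ = r. -/
/-- Let `(S,∘)` be a commutative Clifford semigroup.  Then
`r(a,b) = (a⁰ ∘ b, b⁰ ∘ a)`, with `a⁰ = a ∘ a⁻`, is a set-theoretic solution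
of the Yang-Baxter equation and satisfies `r³ = r`. -/
theorem commutative_clifford_cubic_solution
    {S : Type*} (mul : S → S → S) (inv : S → S)
    (hassoc : ∀ a b c : S, mul (mul a b) c = mul a (mul b c))
    (hcomm : ∀ a b : S, mul a b = mul b a)
    (hcr1 : ∀ a : S, a = mul (mul a (inv a)) a)
    (hcr2 : ∀ a : S, inv a = mul (mul (inv a) a) (inv a))
    (hcr3 : ∀ a : S, mul a (inv a) = mul (inv a) a)
    (hcrUnique : ∀ a b : S, a = mul (mul a b) a → b = mul (mul b a) b →
      mul a b = mul b a → b = inv a)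
    (r : S × S → S × S)
    (hr : ∀ a b : S, r (a, b) = (mul (mul a (inv a)) b, mul (mul b (inv b)) a)) :
    IsYBE r ∧ r ∘ r ∘ r = r := by
  haveI : Std.Associative mul := ⟨hassoc⟩
  haveI : Std.Commutative mul := ⟨hcomm⟩
  have hinvinv : ∀ x : S, inv (inv x) = x := fun x =>
    (hcrUnique (inv x) x (hcr2 x) (hcr1 x) (hcr3 x).symm).symm
  have hinvmul : ∀ x y : S, inv (mul x y) = mul (inv x) (inv y) := by
    intro x y
    refine (hcrUnique (mul x y) (mul (inv x) (inv y)) ?_ ?_ (hcomm _ _)).symm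
    · calc mul x y = mul (mul (mul x (inv x)) x) (mul (mul y (inv y)) y) := by
            rw [← hcr1 x, ← hcr1 y]
        _ = mul (mul (mul x y) (mul (inv x) (inv y))) (mul x y) := by ac_rfl
    · calc mul (inv x) (inv y)
          = mul (mul (mul (inv x) x) (inv x)) (mul (mul (inv y) y) (inv y)) := by
            rw [← hcr2 x, ← hcr2 y]
        _ = mul (mul (mul (inv x) (inv y)) (mul x y)) (mul (inv x) (inv y)) := by ac_rfl
  have habs : ∀ x y : S,
      mul (mul x (inv x)) (mul (mul x (inv x)) y) = mul (mul x (inv x)) y := by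
    intro x y
    calc mul (mul x (inv x)) (mul (mul x (inv x)) y)
        = mul (mul x (mul (mul (inv x) x) (inv x))) y := by ac_rfl
      _ = mul (mul x (inv x)) y := by rw [← hcr2 x]
  have hE : ∀ x : S, mul (mul x (inv x)) x = x := fun x => (hcr1 x).symm
  constructor
  · unfold IsYBE
    funext p
    obtain ⟨a, b, c⟩ := p
    simp only [ybeL, ybeR, Function.comp_apply, hr, hinvmul, hinvinv, Prod.mk.injEq]
    refine ⟨?_, ?_, ?_⟩
    · trans (mul (mul a (inv a)) (mul (mul a (inv a)) (mul (mul a (inv a)) (mul (mul b (inv b)) (mul (mul b (inv b)) (mul (mul b (inv b)) c))))))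
      · ac_rfl
      · rw [habs a, habs a, habs b, habs b]
    · trans (mul (mul a (inv a)) (mul (mul c (inv c)) b))
      · trans (mul (mul a (inv a)) (mul (mul a (inv a)) (mul (mul a (inv a)) (mul (mul c (inv c)) (mul (mul b (inv b)) (mul (mul b (inv b)) (mul (mul b (inv b)) (mul (mul b (inv b)) b))))))))
        · ac_rfl
        · rw [habs a, habs a, habs b, habs b, habs b, hE b]
      · symm
        trans (mul (mul a (inv a)) (mul (mul c (inv c)) (mul (mul c (inv c)) (mul (mul c (inv c)) (mul (mul b (inv b)) (mul (mul b (inv b)) (mul (mul b (inv b)) (mul (mul b (inv b)) b))))))))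
        · ac_rfl
        · rw [habs c, habs c, habs b, habs b, habs b, hE b]
    · symm
      trans (mul (mul c (inv c)) (mul (mul c (inv c)) (mul (mul c (inv c)) (mul (mul b (inv b)) (mul (mul b (inv b)) (mul (mul b (inv b)) a))))))
      · ac_rfl
      · rw [habs c, habs c, habs b, habs b]
  · have hr2 : ∀ a b : S, r (r (a, b)) =
        (mul (mul a (inv a)) (mul (mul b (inv b)) a),
         mul (mul a (inv a)) (mul (mul b (inv b)) b)) := by
      intro a b
      rw [hr a b, hr]
      simp only [hinvmul, hinvinv, Prod.mk.injEq]
      constructor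
      · trans (mul (mul a (inv a)) (mul (mul a (inv a)) (mul (mul b (inv b)) (mul (mul b (inv b)) a))))
        · ac_rfl
        · rw [habs a, habs b]
      · trans (mul (mul a (inv a)) (mul (mul a (inv a)) (mul (mul b (inv b)) (mul (mul b (inv b)) b))))
        · ac_rfl
        · rw [habs a, habs b]
    funext p
    obtain ⟨a, b⟩ := p
    show r (r (r (a, b))) = r (a, b)
    rw [hr2 a b, hr, hr]
    simp only [hinvmul, hinvinv, Prod.mk.injEq]
    constructor
    · trans (mul (mul a (inv a)) (mul (mul a (inv a)) (mul (mul a (inv a)) (mul (mul a (inv a)) (mul (mul b (inv b)) (mul (mul b (inv b)) (mul (mul b (inv b)) b)))))))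
      · ac_rfl
      · rw [habs a, habs a, habs a, habs b, habs b, hE b]
    · trans (mul (mul b (inv b)) (mul (mul b (inv b)) (mul (mul b (inv b)) (mul (mul b (inv b)) (mul (mul a (inv a)) (mul (mul a (inv a)) (mul (mul a (inv a)) a)))))))
      · ac_rfl
      · rw [habs b, habs b, habs b, habs a, habs a, hE a]
end
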